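/- arXiv:1909.10066 — 4 statements merged into one kernel-verified Lean document; each statement's English description precedes it below -/
import Mathlib

section
/- For any opinions ω_AB, ω_B1C1, ω_B2C2 (with α_AB + β_AB + γ_AB > 0), the discounting operation distributes over the combining operation in the second argument: Θ(Δ(ω_AB, ω_B1C1), Δ(ω_AB, ω_B2C2)) = Δ(ω_AB, Θ(ω_B1C1, ω_B2C2)). -/
structure Opinion where
  a : ℝ
  b : ℝ
  c : ℝ

noncomputable def disc (x y : Opinion) : Opinion :=
  let s := x.a + x.b + x.c
  ⟨x.a * y.a / s, x.a * y.b / s, ((x.b + x.c) * (y.a + y.b + y.c) + x.a * y.c) / s⟩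

def comb (x y : Opinion) : Opinion := ⟨x.a + y.a, x.b + y.b, x.c + y.c⟩

def osum (x : Opinion) : ℝ := x.a + x.b + x.c

theorem stmt0_general (wAB w1 w2 : Opinion) :
    comb (disc wAB w1) (disc wAB w2) = disc wAB (comb w1 w2) := by
  -- each coordinate is linear in the second opinion, divided by a fixed `s` (`ring` reads `/ s` as `* s⁻¹`)
  simp only [disc, comb, Opinion.mk.injEq]
  refine ⟨?_, ?_, ?_⟩ <;> ring

theorem stmt0 (wAB w1 w2 : Opinion) (h : 0 < osum wAB) :
    comb (disc wAB w1) (disc wAB w2) = disc wAB (comb w1 w2) :=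
  stmt0_general wAB w1 w2
end

section
/- Discounting does not distribute over combining in the first argument: there exist opinions ω_A1B1, ω_A2B2, ω_BC (with positive component sums) such that Θ(Δ(ω_A1B1, ω_BC), Δ(ω_A2B2, ω_BC)) ≠ Δ(Θ(ω_A1B1, ω_A2B2), ω_BC). -/
theorem stmt3 : ∃ w1 w2 w3 : Opinion,
    (0 ≤ w1.a ∧ 0 ≤ w1.b ∧ 0 ≤ w1.c) ∧ (0 ≤ w2.a ∧ 0 ≤ w2.b ∧ 0 ≤ w2.c) ∧
    (0 ≤ w3.a ∧ 0 ≤ w3.b ∧ 0 ≤ w3.c) ∧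
    0 < osum w1 ∧ 0 < osum w2 ∧ 0 < osum w3 ∧
    comb (disc w1 w3) (disc w2 w3) ≠ disc (comb w1 w2) w3 := by
  -- One fully trusted and one fully distrusted advisor, both certain of C: the belief components
  -- are 1 + 0 on the left, but pooling the trust into ⟨1, 1, 0⟩ halves the right one to 1/2.
  refine ⟨⟨1, 0, 0⟩, ⟨0, 1, 0⟩, ⟨1, 0, 0⟩, ?_⟩
  norm_num [osum, comb, disc]
end

section
/- The discounting operation is associative: for opinions ω₁, ω₂, ω₃ whose component sums are positive, Δ(Δ(ω₁, ω₂), ω₃) = Δ(ω₁, Δ(ω₂, ω₃)). -/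
attribute [ext] Opinion

section Discounting

variable (x y : Opinion)

@[simp]
theorem disc_a : (disc x y).a = x.a * y.a / osum x := rfl

@[simp]
theorem disc_b : (disc x y).b = x.a * y.b / osum x := rfl

@[simp]
theorem disc_c : (disc x y).c = ((x.b + x.c) * osum y + x.a * y.c) / osum x := rfl

variable {x} in
theorem osum_disc (hx : osum x ≠ 0) : osum (disc x y) = osum y := by
  simp only [osum, disc_a, disc_b, disc_c] at hx ⊢
  field_simp
  ring

end Discounting

theorem stmt4_general (w1 w2 w3 : Opinion) (h1 : 0 < osum w1) (h2 : 0 < osum w2) :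
    disc (disc w1 w2) w3 = disc w1 (disc w2 w3) := by
  have hs1 := h1.ne'
  have hs2 := h2.ne'
  ext <;> simp only [disc_a, disc_b, disc_c, osum_disc _ hs1, osum_disc _ hs2] <;> field_simp
  ring

theorem stmt4 (w1 w2 w3 : Opinion) (h1 : 0 < osum w1) (h2 : 0 < osum w2)
    (h3 : 0 < osum w3) :
    disc (disc w1 w2) w3 = disc w1 (disc w2 w3) :=
  stmt4_general w1 w2 w3 h1 h2
end

section
/- The generalized distributivity for finitely many original opinions: for an opinion ω with positive component sum and a finite list of opinions ω₁, …, ωₙ (n ≥ 1), the componentwise sum of Δ(ω, ωᵢ) over i equals Δ(ω, Σᵢ ωᵢ), where Σ denotes componentwise sum. -/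
theorem disc_comb (w x y : Opinion) : disc w (comb x y) = comb (disc w x) (disc w y) := by
  simp only [disc, comb, Opinion.mk.injEq]
  refine ⟨?_, ?_, ?_⟩ <;> ring

theorem disc_zero (w : Opinion) : disc w ⟨0, 0, 0⟩ = ⟨0, 0, 0⟩ := by
  simp [disc]

theorem stmt9_general (w : Opinion) (l : List Opinion) :
    (l.map (disc w)).foldr comb ⟨0, 0, 0⟩ = disc w (l.foldr comb ⟨0, 0, 0⟩) := by
  rw [List.foldr_map, ← List.foldr_hom (disc w) fun x y => (disc_comb w x y).symm, disc_zero]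

theorem stmt9 (w : Opinion) (h : 0 < osum w) (l : List Opinion) (hne : l ≠ []) :
    (l.map (disc w)).foldr comb ⟨0, 0, 0⟩ = disc w (l.foldr comb ⟨0, 0, 0⟩) :=
  stmt9_general w l
end
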